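/- Let -1 < λ < 0 and let (a_{j,k})_{j≥1, 1≤k≤2^j} be nonnegative reals with a_{j,k} ≤ 2π for all j,k. Then ∑_{j=1}^∞ j^λ ∑_{k=1}^{2^j} a_{j,k}² < ∞ if and only if ∑_{j=1}^∞ ∑_{k=1}^{2^j} a_{j,k}² log^λ(e + 2^j a_{j,k}) < ∞. -/

import Mathlib

/-!
Both series are compared block by block. Since `0 ≤ a ≤ M`, `log (e + 2^j a) ≤ j log (2 (e + M))`,
so `log^λ (e + 2^j a) ≳ j^λ` and the first series is dominated by the second. Conversely, where
`a² > 3^{-j}` one has `2 log (2^j a) > j log (4/3)`, so `log^λ (e + 2^j a) ≲ j^λ`; the remaining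
terms have `a² ≤ 3^{-j}` and `log^λ ≤ 1`, and the `2^j` of them in block `j` add up to at most
`(2/3)^j`, which is summable.
-/

open Real Finset

section

variable {lam x : ℝ} {n : ℕ}

theorem one_le_log_exp_one_add {y : ℝ} (hy : 0 ≤ y) : 1 ≤ log (exp 1 + y) :=
  calc 1 = log (exp 1) := (log_exp 1).symm
    _ ≤ log (exp 1 + y) := log_le_log (exp_pos 1) (by linarith)

theorem log_exp_one_add_two_pow_mul_le {M : ℝ} (hn : 1 ≤ n) (hx₀ : 0 ≤ x) (hxM : x ≤ M) :
    log (exp 1 + 2 ^ n * x) ≤ n * log (2 * (exp 1 + M)) := by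
  have he : 1 ≤ exp 1 + M := by linarith [add_one_le_exp 1]
  have hbound : exp 1 + 2 ^ n * x ≤ (2 * (exp 1 + M)) ^ n :=
    calc exp 1 + 2 ^ n * x ≤ 2 ^ n * (exp 1 + M) := by
          nlinarith [one_le_pow₀ (M₀ := ℝ) one_le_two (n := n), exp_pos 1]
      _ ≤ 2 ^ n * (exp 1 + M) ^ n := by
          gcongr
          simpa using pow_le_pow_right₀ he hn
      _ = (2 * (exp 1 + M)) ^ n := (mul_pow _ _ _).symm
  calc log (exp 1 + 2 ^ n * x) ≤ log ((2 * (exp 1 + M)) ^ n) :=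
        log_le_log (by positivity) hbound
    _ = n * log (2 * (exp 1 + M)) := log_pow _ _

theorem rpow_mul_sq_le_sq_mul_log_rpow {M : ℝ} (hlam : lam ≤ 0) (hn : 1 ≤ n) (hx₀ : 0 ≤ x)
    (hxM : x ≤ M) :
    log (2 * (exp 1 + M)) ^ lam * ((n : ℝ) ^ lam * x ^ 2) ≤
      x ^ 2 * log (exp 1 + 2 ^ n * x) ^ lam := by
  have hL : 0 ≤ log (2 * (exp 1 + M)) :=
    log_nonneg (by linarith [add_one_le_exp 1])
  have hlog : 0 < log (exp 1 + 2 ^ n * x) :=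
    one_pos.trans_le (one_le_log_exp_one_add (by positivity))
  have hpow : (n * log (2 * (exp 1 + M))) ^ lam ≤ log (exp 1 + 2 ^ n * x) ^ lam :=
    rpow_le_rpow_of_nonpos hlog (log_exp_one_add_two_pow_mul_le hn hx₀ hxM) hlam
  rw [mul_rpow n.cast_nonneg hL] at hpow
  nlinarith [sq_nonneg x]

theorem sq_mul_log_rpow_le (hlam : lam ≤ 0) (hn : 1 ≤ n) (hx₀ : 0 ≤ x) :
    x ^ 2 * log (exp 1 + 2 ^ n * x) ^ lam ≤
      (log (4 / 3) / 2) ^ lam * ((n : ℝ) ^ lam * x ^ 2) + (1 / 3) ^ n := by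
  have hc : 0 < log (4 / 3) / 2 := by have := log_pos (by norm_num : (1 : ℝ) < 4 / 3); positivity
  have hmain_nonneg : 0 ≤ (log (4 / 3) / 2) ^ lam * ((n : ℝ) ^ lam * x ^ 2) := by positivity
  rcases le_or_gt (x ^ 2) ((1 / 3) ^ n) with hsmall | hlarge
  · have hpow : log (exp 1 + 2 ^ n * x) ^ lam ≤ 1 :=
      rpow_le_one_of_one_le_of_nonpos (one_le_log_exp_one_add (by positivity)) hlam
    nlinarith [sq_nonneg x]
  · have hxpos : 0 < 2 ^ n * x := by
      have : 0 < x := by nlinarith [pow_pos (by norm_num : (0 : ℝ) < 1 / 3) n]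
      positivity
    have hlog : log (4 / 3) / 2 * n ≤ log (exp 1 + 2 ^ n * x) := by
      have hsq : (4 / 3 : ℝ) ^ n < (2 ^ n * x) ^ 2 := by
        calc (4 / 3 : ℝ) ^ n = 4 ^ n * (1 / 3) ^ n := by rw [← mul_pow]; norm_num
          _ < 4 ^ n * x ^ 2 := by gcongr
          _ = (2 ^ n * x) ^ 2 := by rw [mul_pow, ← pow_mul, mul_comm n 2, pow_mul]; norm_num
      have hlog_sq : n * log (4 / 3) < 2 * log (2 ^ n * x) := by
        simpa only [log_pow, Nat.cast_ofNat] using log_lt_log (by positivity) hsq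
      have hlog_mono : log (2 ^ n * x) ≤ log (exp 1 + 2 ^ n * x) :=
        log_le_log hxpos (by linarith [exp_pos 1])
      linarith
    have hpow := rpow_le_rpow_of_nonpos (by positivity) hlog hlam
    rw [mul_rpow hc.le n.cast_nonneg] at hpow
    nlinarith [sq_nonneg x, pow_pos (by norm_num : (0 : ℝ) < 1 / 3) n]

variable {ι : Type*} {s : Finset ι} {f : ι → ℝ}

theorem sum_sq_mul_log_rpow_le (hlam : lam ≤ 0) (hn : 1 ≤ n) (hs : #s ≤ 2 ^ n)
    (hf : ∀ i ∈ s, 0 ≤ f i) :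
    ∑ i ∈ s, f i ^ 2 * log (exp 1 + 2 ^ n * f i) ^ lam ≤
      (log (4 / 3) / 2) ^ lam * ((n : ℝ) ^ lam * ∑ i ∈ s, f i ^ 2) + (2 / 3) ^ n :=
  calc ∑ i ∈ s, f i ^ 2 * log (exp 1 + 2 ^ n * f i) ^ lam
      ≤ ∑ i ∈ s, ((log (4 / 3) / 2) ^ lam * ((n : ℝ) ^ lam * f i ^ 2) + (1 / 3) ^ n) :=
        sum_le_sum fun i hi => sq_mul_log_rpow_le hlam hn (hf i hi)
    _ = (log (4 / 3) / 2) ^ lam * ((n : ℝ) ^ lam * ∑ i ∈ s, f i ^ 2) + #s * (1 / 3) ^ n := by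
        rw [sum_add_distrib, sum_const, nsmul_eq_mul, ← mul_sum, ← mul_sum]
    _ ≤ (log (4 / 3) / 2) ^ lam * ((n : ℝ) ^ lam * ∑ i ∈ s, f i ^ 2) + 2 ^ n * (1 / 3) ^ n := by
        gcongr
        exact_mod_cast hs
    _ = (log (4 / 3) / 2) ^ lam * ((n : ℝ) ^ lam * ∑ i ∈ s, f i ^ 2) + (2 / 3) ^ n := by
        rw [← mul_pow]; norm_num

theorem rpow_mul_sum_sq_le {M : ℝ} (hlam : lam ≤ 0) (hn : 1 ≤ n) (hM : 0 ≤ M)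
    (hf₀ : ∀ i ∈ s, 0 ≤ f i) (hfM : ∀ i ∈ s, f i ≤ M) :
    (n : ℝ) ^ lam * ∑ i ∈ s, f i ^ 2 ≤
      (log (2 * (exp 1 + M)) ^ lam)⁻¹ * ∑ i ∈ s, f i ^ 2 * log (exp 1 + 2 ^ n * f i) ^ lam := by
  have hL : 0 < log (2 * (exp 1 + M)) := log_pos (by linarith [add_one_le_exp 1])
  rw [le_inv_mul_iff₀ (rpow_pos_of_pos hL _), mul_sum, mul_sum]
  exact sum_le_sum fun i hi => rpow_mul_sq_le_sq_mul_log_rpow hlam hn (hf₀ i hi) (hfM i hi)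

end

theorem stmt_8_general (lam : ℝ) (hlam₂ : lam < 0) (a : ℕ → ℕ → ℝ)
    (ha : ∀ j k, 0 ≤ a j k) (hb : ∀ j k, a j k ≤ 2 * π) :
    (Summable fun j : ℕ =>
      ((j:ℝ) + 1) ^ lam * ∑ k ∈ Finset.Icc 1 (2 ^ (j + 1)), a (j + 1) k ^ 2)
    ↔ (Summable fun j : ℕ =>
      ∑ k ∈ Finset.Icc 1 (2 ^ (j + 1)),
        a (j + 1) k ^ 2 * Real.log (Real.exp 1 + 2 ^ (j + 1) * a (j + 1) k) ^ lam) := by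
  have hj : ∀ j : ℕ, 1 ≤ j + 1 := fun j => Nat.le_add_left 1 j
  constructor
  · intro h
    have hgeom : Summable fun j : ℕ => (2 / 3 : ℝ) ^ (j + 1) :=
      (summable_nat_add_iff 1).mpr (summable_geometric_of_lt_one (by norm_num) (by norm_num))
    refine Summable.of_nonneg_of_le (fun j => sum_nonneg fun k _ => ?_) (fun j => ?_)
      ((h.mul_left ((log (4 / 3) / 2) ^ lam)).add hgeom)
    · exact mul_nonneg (sq_nonneg _)
        (rpow_nonneg (zero_le_one.trans (one_le_log_exp_one_add (mul_nonneg (by positivity) (ha _ _)))) _)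
    · simpa using sum_sq_mul_log_rpow_le (s := Icc 1 (2 ^ (j + 1))) hlam₂.le (hj j) (by simp)
        fun k _ => ha (j + 1) k
  · intro h
    refine Summable.of_nonneg_of_le (fun j => by positivity) (fun j => ?_)
      (h.mul_left (log (2 * (exp 1 + 2 * π)) ^ lam)⁻¹)
    simpa using rpow_mul_sum_sq_le (s := Icc 1 (2 ^ (j + 1))) hlam₂.le (hj j) two_pi_pos.le
      (fun k _ => ha (j + 1) k) fun k _ => hb (j + 1) k

/-- Let `-1 < λ < 0` and let `a_{j,k}`, `j ≥ 1`, `1 ≤ k ≤ 2^j`, be nonnegative reals bounded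
by `2π`. Then `∑_j j^λ ∑_k a_{j,k}² < ∞` iff `∑_j ∑_k a_{j,k}² log^λ(e + 2^j a_{j,k}) < ∞`. -/
theorem stmt_8 (lam : ℝ) (hlam₁ : -1 < lam) (hlam₂ : lam < 0) (a : ℕ → ℕ → ℝ)
    (ha : ∀ j k, 0 ≤ a j k) (hb : ∀ j k, a j k ≤ 2 * π) :
    (Summable fun j : ℕ =>
      ((j:ℝ) + 1) ^ lam * ∑ k ∈ Finset.Icc 1 (2 ^ (j + 1)), a (j + 1) k ^ 2)
    ↔ (Summable fun j : ℕ =>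
      ∑ k ∈ Finset.Icc 1 (2 ^ (j + 1)),
        a (j + 1) k ^ 2 * Real.log (Real.exp 1 + 2 ^ (j + 1) * a (j + 1) k) ^ lam) :=
  stmt_8_general lam hlam₂ a ha hb
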